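/- (Deterministic core of Theorem 4.2: one GRBK step contracts in weighted average) Let A ∈ ℝ^{m×p} have all rows nonzero, B ∈ ℝ^{q×n}, C ∈ ℝ^{m×n}, let X⋆ satisfy A X⋆ B = C, and let 0 < α < 2/‖B‖². Let σ_A, σ_B > 0 be such that ‖A v‖ ≥ σ_A ‖v‖ for all v in the column space of Aᵀ and ‖Bᵀ w‖ ≥ σ_B ‖w‖ for all w in the column space of B. Let X ∈ ℝ^{p×q} have every column of X − X⋆ in the column space of Aᵀ and every column of (X − X⋆)ᵀ in the column space of B, and set R = C − A X B with R ≠ 0. Define γ := (1/2)[ max_i ‖R_{i,:}‖²/‖A_{i,:}‖² + ‖R‖_F²/‖A‖_F² ], 𝒥 := { i : ‖R_{i,:}‖² ≥ γ ‖A_{i,:}‖² }, ζ := (1/2)[ (max_i ‖R_{i,:}‖²/‖A_{i,:}‖²)/‖R‖_F² + 1/‖A‖_F² ], and for i ∈ 𝒥 set X⁺ᵢ = X + (α/‖A_{i,:}‖²) A_{i,:}ᵀ R_{i,:} Bᵀ. Then Σ_{i∈𝒥} ( ‖R_{i,:}‖² / Σ_{j∈𝒥} ‖R_{j,:}‖²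 ) ‖X⁺ᵢ − X⋆‖_F² ≤ (1 − (2α − α²‖B‖²) · ζ · σ_A² σ_B²) ‖X − X⋆‖_F². -/

import Mathlib

open Matrix Finset Filter Topology

/-- Squared Euclidean norm of a vector. -/
noncomputable def vnormSq {k : ℕ} (v : Fin k → ℝ) : ℝ := ∑ j, (v j) ^ 2

/-- Squared Frobenius norm of a matrix. -/
noncomputable def frobSq {a b : ℕ} (X : Matrix (Fin a) (Fin b) ℝ) : ℝ := ∑ i, ∑ j, (X i j) ^ 2

/-- Frobenius norm of a matrix. -/
noncomputable def frobNorm {a b : ℕ} (X : Matrix (Fin a) (Fin b) ℝ) : ℝ := Real.sqrt (frobSq X)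

/-- Frobenius (trace) inner product `⟨X, Y⟩_F = tr(Xᵀ Y)`. -/
noncomputable def frobInner {a b : ℕ} (X Y : Matrix (Fin a) (Fin b) ℝ) : ℝ := Matrix.trace (Xᵀ * Y)

/-- Spectral (operator 2-) norm of a matrix. -/
noncomputable def specNorm {a b : ℕ} (B : Matrix (Fin a) (Fin b) ℝ) : ℝ :=
  ‖LinearMap.toContinuousLinearMap (Matrix.toEuclideanLin B)‖

/-- `Mp` is the Moore–Penrose pseudoinverse of `M`: the four Penrose conditions. -/
def IsMPInv {a b : ℕ} (M : Matrix (Fin a) (Fin b) ℝ) (Mp : Matrix (Fin b) (Fin a) ℝ) : Prop :=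
  M * Mp * M = M ∧ Mp * M * Mp = Mp ∧ (M * Mp)ᵀ = M * Mp ∧ (Mp * M)ᵀ = Mp * M

lemma vnormSq_nonneg {k : ℕ} (v : Fin k → ℝ) : 0 ≤ vnormSq v :=
  Finset.sum_nonneg fun _ _ => sq_nonneg _

lemma vnormSq_pos {k : ℕ} {v : Fin k → ℝ} (hv : v ≠ 0) : 0 < vnormSq v := by
  rcases (vnormSq_nonneg v).lt_or_eq with h | h
  · exact h
  · exfalso
    apply hv
    funext j
    have h0 := (Finset.sum_eq_zero_iff_of_nonneg (fun i _ => sq_nonneg (v i))).mp h.symm j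
      (Finset.mem_univ j)
    exact pow_eq_zero_iff (two_ne_zero) |>.mp h0

lemma frobSq_eq_rows {a b : ℕ} (X : Matrix (Fin a) (Fin b) ℝ) :
    frobSq X = ∑ i, vnormSq (X i) := rfl

lemma frobSq_eq_cols {a b : ℕ} (X : Matrix (Fin a) (Fin b) ℝ) :
    frobSq X = ∑ j, vnormSq (fun i => X i j) := by
  rw [frobSq, Finset.sum_comm]; rfl

lemma frobSq_nonneg {a b : ℕ} (X : Matrix (Fin a) (Fin b) ℝ) : 0 ≤ frobSq X :=
  Finset.sum_nonneg fun _ _ => vnormSq_nonneg _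

lemma vnormSq_eq_sq_norm {k : ℕ} (v : Fin k → ℝ) :
    vnormSq v = ‖(WithLp.equiv 2 (Fin k → ℝ)).symm v‖ ^ 2 := by
  rw [EuclideanSpace.norm_eq, Real.sq_sqrt (by positivity)]
  simp [vnormSq, Real.norm_eq_abs, sq_abs]

lemma vnormSq_mulVec_le {a b : ℕ} (B : Matrix (Fin a) (Fin b) ℝ) (w : Fin b → ℝ) :
    vnormSq (B *ᵥ w) ≤ specNorm B ^ 2 * vnormSq w := by
  have h := (LinearMap.toContinuousLinearMap (Matrix.toEuclideanLin B)).le_opNorm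
      ((WithLp.equiv 2 (Fin b → ℝ)).symm w)
  have hx : (LinearMap.toContinuousLinearMap (Matrix.toEuclideanLin B))
      ((WithLp.equiv 2 (Fin b → ℝ)).symm w) = (WithLp.equiv 2 (Fin a → ℝ)).symm (B *ᵥ w) := by
    simp [Matrix.toEuclideanLin_apply_piLp_toLp]
  rw [hx] at h
  rw [vnormSq_eq_sq_norm (B *ᵥ w), vnormSq_eq_sq_norm w]
  calc ‖(WithLp.equiv 2 (Fin a → ℝ)).symm (B *ᵥ w)‖ ^ 2
      ≤ (specNorm B * ‖(WithLp.equiv 2 (Fin b → ℝ)).symm w‖) ^ 2 := by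
        apply pow_le_pow_left₀ (norm_nonneg _) h
    _ = specNorm B ^ 2 * ‖(WithLp.equiv 2 (Fin b → ℝ)).symm w‖ ^ 2 := by ring

lemma expand_step {p q : ℕ} (E : Matrix (Fin p) (Fin q) ℝ) (c : ℝ) (a : Fin p → ℝ)
    (v : Fin q → ℝ) :
    frobSq (E + c • vecMulVec a v) =
      frobSq E + 2 * c * (∑ k, ∑ l, E k l * (a k * v l)) + c ^ 2 * (vnormSq a * vnormSq v) := by
  simp only [frobSq, vnormSq, Matrix.add_apply, Matrix.smul_apply, Matrix.vecMulVec_apply,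
    smul_eq_mul]
  have : ∀ k l, (E k l + c * (a k * v l)) ^ 2
      = E k l ^ 2 + 2 * c * (E k l * (a k * v l)) + c ^ 2 * (a k ^ 2 * v l ^ 2) := by
    intros; ring
  simp_rw [this, Finset.sum_add_distrib, ← Finset.mul_sum]
  rw [← Finset.sum_mul]

lemma cross_eq {m p q n : ℕ} (A : Matrix (Fin m) (Fin p) ℝ) (E : Matrix (Fin p) (Fin q) ℝ)
    (B : Matrix (Fin q) (Fin n) ℝ) (i : Fin m) (r : Fin n → ℝ) :
    ∑ k, ∑ l, E k l * (A i k * (B *ᵥ r) l) = ∑ j, (A * E * B) i j * r j := by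
  have lhs : ∑ k, ∑ l, E k l * (A i k * (B *ᵥ r) l)
      = ∑ k, ∑ l, ∑ j, A i k * E k l * B l j * r j := by
    apply Finset.sum_congr rfl; intro k _
    apply Finset.sum_congr rfl; intro l _
    simp only [Matrix.mulVec, dotProduct, Finset.mul_sum]
    apply Finset.sum_congr rfl; intro j _; ring
  have rhs : ∑ j, (A * E * B) i j * r j = ∑ j, ∑ l, ∑ k, A i k * E k l * B l j * r j := by
    apply Finset.sum_congr rfl; intro j _
    simp only [Matrix.mul_apply, Finset.sum_mul]
  rw [lhs, rhs, Finset.sum_comm]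
  conv_rhs => rw [Finset.sum_comm]
  apply Finset.sum_congr rfl; intro l _
  rw [Finset.sum_comm]

/-- Deterministic core of Theorem 4.2: one GRBK step contracts in weighted average
with factor `1 − (2α − α²‖B‖²) ζ σ_A² σ_B²`. -/
theorem stmt17 {m p q n : ℕ}
    (A : Matrix (Fin m) (Fin p) ℝ) (hrows : ∀ i : Fin m, A i ≠ 0)
    (B : Matrix (Fin q) (Fin n) ℝ) (C : Matrix (Fin m) (Fin n) ℝ)
    (Xstar : Matrix (Fin p) (Fin q) ℝ) (hsol : A * Xstar * B = C)
    (α : ℝ) (hα1 : 0 < α) (hα2 : α < 2 / specNorm B ^ 2)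
    (σA σB : ℝ) (hσA : 0 < σA) (hσB : 0 < σB)
    (hA : ∀ v : Fin p → ℝ, (∃ u : Fin m → ℝ, v = Aᵀ *ᵥ u) →
      σA * Real.sqrt (vnormSq v) ≤ Real.sqrt (vnormSq (A *ᵥ v)))
    (hB : ∀ w : Fin q → ℝ, (∃ u : Fin n → ℝ, w = B *ᵥ u) →
      σB * Real.sqrt (vnormSq w) ≤ Real.sqrt (vnormSq (Bᵀ *ᵥ w)))
    (X : Matrix (Fin p) (Fin q) ℝ)
    (hcol : ∀ j : Fin q, ∃ u : Fin m → ℝ, (fun i => (X - Xstar) i j) = Aᵀ *ᵥ u)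
    (hrow : ∀ i : Fin p, ∃ w : Fin n → ℝ, (X - Xstar) i = B *ᵥ w)
    (R : Matrix (Fin m) (Fin n) ℝ) (hRdef : R = C - A * X * B) (hR0 : R ≠ 0)
    (istar : Fin m)
    (hmax : ∀ i : Fin m,
      vnormSq (R i) / vnormSq (A i) ≤ vnormSq (R istar) / vnormSq (A istar))
    (γ ζ : ℝ)
    (hγ : γ = (1 / 2) * (vnormSq (R istar) / vnormSq (A istar) + frobSq R / frobSq A))
    (hζ : ζ = (1 / 2) * ((vnormSq (R istar) / vnormSq (A istar)) / frobSq R + 1 / frobSq A))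
    (J : Finset (Fin m))
    (hJ : J = Finset.univ.filter fun i => γ * vnormSq (A i) ≤ vnormSq (R i)) :
    ∑ i ∈ J, (vnormSq (R i) / ∑ j ∈ J, vnormSq (R j)) *
        frobSq (X + (α / vnormSq (A i)) • vecMulVec (A i) (B *ᵥ (R i)) - Xstar)
      ≤ (1 - (2 * α - α ^ 2 * specNorm B ^ 2) * ζ * (σA ^ 2 * σB ^ 2))
          * frobSq (X - Xstar) := by
  set E := X - Xstar with hE
  -- basic positivity
  have hAi : ∀ i, 0 < vnormSq (A i) := fun i => vnormSq_pos (hrows i)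
  have hfA : 0 < frobSq A := by
    rw [frobSq_eq_rows]
    exact Finset.sum_pos' (fun i _ => vnormSq_nonneg _) ⟨istar, Finset.mem_univ _, hAi istar⟩
  have hRrow : ∃ i, R i ≠ 0 := by
    by_contra h
    push_neg at h
    exact hR0 (by ext i j; rw [h i]; rfl)
  obtain ⟨i0, hi0⟩ := hRrow
  have hfR : 0 < frobSq R := by
    rw [frobSq_eq_rows]
    exact Finset.sum_pos' (fun i _ => vnormSq_nonneg _) ⟨i0, Finset.mem_univ _, vnormSq_pos hi0⟩
  set Mx := vnormSq (R istar) / vnormSq (A istar) with hMx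
  have hMpos : 0 < Mx :=
    lt_of_lt_of_le (div_pos (vnormSq_pos hi0) (hAi i0)) (hmax i0)
  have hRistar : 0 < vnormSq (R istar) := by
    have h2 : 0 < Mx * vnormSq (A istar) := mul_pos hMpos (hAi istar)
    rwa [hMx, div_mul_cancel₀ _ (ne_of_gt (hAi istar))] at h2
  -- A E B = -R
  have hAEB : A * E * B = -R := by
    rw [hRdef, hE, Matrix.mul_sub, Matrix.sub_mul, hsol, neg_sub]
  -- frobSq R ≤ Mx * frobSq A
  have hRA : frobSq R ≤ Mx * frobSq A := by
    rw [frobSq_eq_rows R, frobSq_eq_rows A, Finset.mul_sum]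
    apply Finset.sum_le_sum
    intro i _
    exact (div_le_iff₀ (hAi i)).mp (hmax i)
  have hγM : γ ≤ Mx := by
    have : frobSq R / frobSq A ≤ Mx := (div_le_iff₀ hfA).mpr hRA
    rw [hγ]
    linarith
  have histar : istar ∈ J := by
    rw [hJ, Finset.mem_filter]
    refine ⟨Finset.mem_univ _, ?_⟩
    have hMA : Mx * vnormSq (A istar) = vnormSq (R istar) := by
      rw [hMx, div_mul_cancel₀ _ (ne_of_gt (hAi istar))]
    nlinarith [hAi istar]
  have hS : 0 < ∑ j ∈ J, vnormSq (R j) := by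
    apply Finset.sum_pos' (fun i _ => vnormSq_nonneg _)
    exact ⟨istar, histar, hRistar⟩
  -- spectral norm positivity
  have hs2 : 0 < specNorm B ^ 2 := by
    rcases (norm_nonneg (LinearMap.toContinuousLinearMap (Matrix.toEuclideanLin B))).lt_or_eq
      with h | h
    · exact pow_pos h 2
    · exfalso
      have h0 : specNorm B = 0 := h.symm
      rw [h0] at hα2
      norm_num at hα2
      linarith
  have hη : 0 < 2 * α - α ^ 2 * specNorm B ^ 2 := by
    have hlt : α * specNorm B ^ 2 < 2 := (lt_div_iff₀ hs2).mp hα2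
    nlinarith
  -- column bound
  have hcolAE : ∀ j, (fun i => (A * E) i j) = A *ᵥ (fun k => E k j) := by
    intro j; funext i1
    simp [Matrix.mul_apply, Matrix.mulVec, dotProduct]
  have hAE_ge : σA ^ 2 * frobSq E ≤ frobSq (A * E) := by
    rw [frobSq_eq_cols E, frobSq_eq_cols (A * E), Finset.mul_sum]
    apply Finset.sum_le_sum
    intro j _
    have h := hA (fun k => E k j) (hcol j)
    have h2 := pow_le_pow_left₀ (mul_nonneg hσA.le (Real.sqrt_nonneg _)) h 2
    rw [mul_pow, Real.sq_sqrt (vnormSq_nonneg _), Real.sq_sqrt (vnormSq_nonneg _)] at h2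
    rw [hcolAE j]
    exact h2
  -- row bound
  have hrowAEB : ∀ i1 : Fin m, (A * E * B) i1 = Bᵀ *ᵥ ((A * E) i1) := by
    intro i1; funext j
    simp only [Matrix.mul_apply, Matrix.mulVec, dotProduct, Matrix.transpose_apply]
    apply Finset.sum_congr rfl; intro l _; ring
  choose w hw using hrow
  have hmem : ∀ i1 : Fin m, ∃ u : Fin n → ℝ, (A * E) i1 = B *ᵥ u := by
    intro i1
    refine ⟨fun l => ∑ k, A i1 k * w k l, ?_⟩
    funext j
    simp only [Matrix.mul_apply, Matrix.mulVec, dotProduct]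
    have hEk : ∀ k, E k j = ∑ l, B j l * w k l := by
      intro k
      have := congrFun (hw k) j
      simpa [Matrix.mulVec, dotProduct] using this
    calc ∑ k, A i1 k * E k j = ∑ k, ∑ l, B j l * (A i1 k * w k l) := by
          apply Finset.sum_congr rfl; intro k _
          rw [hEk k, Finset.mul_sum]
          apply Finset.sum_congr rfl; intro l _; ring
      _ = ∑ l, ∑ k, B j l * (A i1 k * w k l) := Finset.sum_comm
      _ = ∑ l, B j l * ∑ k, A i1 k * w k l := by
          apply Finset.sum_congr rfl; intro l _
          rw [Finset.mul_sum]
  have hB_ge : σB ^ 2 * frobSq (A * E) ≤ frobSq (A * E * B) := by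
    rw [frobSq_eq_rows (A * E), frobSq_eq_rows (A * E * B), Finset.mul_sum]
    apply Finset.sum_le_sum
    intro i1 _
    have h := hB ((A * E) i1) (hmem i1)
    have h2 := pow_le_pow_left₀ (mul_nonneg hσB.le (Real.sqrt_nonneg _)) h 2
    rw [mul_pow, Real.sq_sqrt (vnormSq_nonneg _), Real.sq_sqrt (vnormSq_nonneg _)] at h2
    rw [hrowAEB i1]
    exact h2
  have hfAEB : frobSq (A * E * B) = frobSq R := by
    rw [hAEB]
    simp [frobSq, Matrix.neg_apply]
  have hRE : σA ^ 2 * σB ^ 2 * frobSq E ≤ frobSq R := by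
    calc σA ^ 2 * σB ^ 2 * frobSq E = σB ^ 2 * (σA ^ 2 * frobSq E) := by ring
      _ ≤ σB ^ 2 * frobSq (A * E) := by
          apply mul_le_mul_of_nonneg_left hAE_ge (sq_nonneg σB)
      _ ≤ frobSq (A * E * B) := hB_ge
      _ = frobSq R := hfAEB
  -- γ = ζ * frobSq R, ζ ≥ 0
  have hγζ : γ = ζ * frobSq R := by
    rw [hγ, hζ]
    field_simp
  have hζ0 : 0 ≤ ζ := by
    rw [hζ]
    have h1 : 0 ≤ Mx / frobSq R := div_nonneg hMpos.le hfR.le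
    have h2 : 0 ≤ 1 / frobSq A := by positivity
    linarith
  -- per-step bound
  have key : ∀ i ∈ J,
      frobSq (X + (α / vnormSq (A i)) • vecMulVec (A i) (B *ᵥ (R i)) - Xstar)
        ≤ frobSq E - (2 * α - α ^ 2 * specNorm B ^ 2) * γ := by
    intro i hi
    have hiJ : γ * vnormSq (A i) ≤ vnormSq (R i) := by
      rw [hJ, Finset.mem_filter] at hi
      exact hi.2
    have hai := hAi i
    have ha' : vnormSq (A i) ≠ 0 := ne_of_gt hai
    have hmat : X + (α / vnormSq (A i)) • vecMulVec (A i) (B *ᵥ (R i)) - Xstar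
        = E + (α / vnormSq (A i)) • vecMulVec (A i) (B *ᵥ (R i)) := by
      rw [hE, add_sub_right_comm]
    rw [hmat, expand_step]
    have hcross : ∑ k, ∑ l, E k l * (A i k * (B *ᵥ (R i)) l) = -vnormSq (R i) := by
      rw [cross_eq A E B i (R i), hAEB, vnormSq]
      rw [← Finset.sum_neg_distrib]
      apply Finset.sum_congr rfl; intro j _
      rw [Matrix.neg_apply]; ring
    rw [hcross]
    have hBr := vnormSq_mulVec_le B (R i)
    set t := vnormSq (R i) with ht
    set a := vnormSq (A i) with ha
    set s2 := specNorm B ^ 2 with hs2d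
    set br := vnormSq (B *ᵥ (R i)) with hbr
    have hta : γ ≤ t / a := (le_div_iff₀ hai).mpr hiJ
    have e1 : frobSq E + 2 * (α / a) * (-t) + (α / a) ^ 2 * (a * br)
        = frobSq E - 2 * α * (t / a) + α ^ 2 * (br / a) := by
      field_simp
      ring
    rw [e1]
    have b1 : α ^ 2 * (br / a) ≤ α ^ 2 * (s2 * t / a) := by
      gcongr
    have b2 : (2 * α - α ^ 2 * s2) * γ ≤ (2 * α - α ^ 2 * s2) * (t / a) :=
      mul_le_mul_of_nonneg_left hta hη.le
    have e2 : (2 * α - α ^ 2 * s2) * (t / a) = 2 * α * (t / a) - α ^ 2 * (s2 * t / a) := by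
      ring
    linarith
  -- weighted sum
  set S := ∑ j ∈ J, vnormSq (R j) with hSdef
  calc ∑ i ∈ J, (vnormSq (R i) / S) *
        frobSq (X + (α / vnormSq (A i)) • vecMulVec (A i) (B *ᵥ (R i)) - Xstar)
      ≤ ∑ i ∈ J, (vnormSq (R i) / S) *
          (frobSq E - (2 * α - α ^ 2 * specNorm B ^ 2) * γ) := by
        apply Finset.sum_le_sum
        intro i hi
        exact mul_le_mul_of_nonneg_left (key i hi) (div_nonneg (vnormSq_nonneg _) hS.le)
    _ = (frobSq E - (2 * α - α ^ 2 * specNorm B ^ 2) * γ) := by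
        rw [← Finset.sum_mul, ← Finset.sum_div, ← hSdef, div_self (ne_of_gt hS), one_mul]
    _ ≤ (1 - (2 * α - α ^ 2 * specNorm B ^ 2) * ζ * (σA ^ 2 * σB ^ 2)) * frobSq E := by
        have c1 : ζ * (σA ^ 2 * σB ^ 2 * frobSq E) ≤ ζ * frobSq R := by
          apply mul_le_mul_of_nonneg_left _ hζ0
          linarith [hRE]
        have c2 : (2 * α - α ^ 2 * specNorm B ^ 2) * (ζ * (σA ^ 2 * σB ^ 2 * frobSq E))
            ≤ (2 * α - α ^ 2 * specNorm B ^ 2) * (ζ * frobSq R) :=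
          mul_le_mul_of_nonneg_left c1 hη.le
        have e3 : (1 - (2 * α - α ^ 2 * specNorm B ^ 2) * ζ * (σA ^ 2 * σB ^ 2)) * frobSq E
            = frobSq E - (2 * α - α ^ 2 * specNorm B ^ 2)
                * (ζ * (σA ^ 2 * σB ^ 2 * frobSq E)) := by
          ring
        rw [e3, hγζ]
        linarith
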